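/- arXiv:1306.2003 — 5 statements merged into one kernel-verified Lean document; each statement's English description precedes it below -/
import Mathlib

section
/- Let m ≥ 1 be an integer, L ≥ m a real number, Σ₁ and Σ₂ m×m Hermitian positive definite complex matrices, and β ∈ (0,1). Then the matrix Σ_β := (β·Σ₁⁻¹ + (1−β)·Σ₂⁻¹)⁻¹ is Hermitian positive definite, and for every m×m Hermitian positive definite complex matrix Z one has the pointwise identity f(Z;Σ₁,L)^β · f(Z;Σ₂,L)^{1−β} = [det(Σ_β) / (det(Σ₁)^β · det(Σ₂)^{1−β})]^L · f(Z;Σ_β,L), where all determinants are the (positive real) determinants of the Hermitian positive definite matrices involved. (This identity underlies the closed-form Rényi, Bhattacharyya and Hellinger distances between scaled complex Wishart laws.) -/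
open Matrix ComplexOrder

/-- Real (positive) determinant of a Hermitian positive definite complex matrix. -/
noncomputable def pdet {m : ℕ} (A : Matrix (Fin m) (Fin m) ℂ) : ℝ := A.det.re

/-- Real trace. -/
noncomputable def rtrace {m : ℕ} (A : Matrix (Fin m) (Fin m) ℂ) : ℝ := A.trace.re

/-- Multivariate gamma function Γ_m(L) = π^{m(m−1)/2} ∏_{i=0}^{m−1} Γ(L−i). -/
noncomputable def mGamma (m : ℕ) (L : ℝ) : ℝ :=
  Real.pi ^ (m * (m - 1) / 2) * ∏ i ∈ Finset.range m, Real.Gamma (L - i)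

/-- Scaled complex Wishart density. -/
noncomputable def wdens (m : ℕ) (L : ℝ) (S Z : Matrix (Fin m) (Fin m) ℂ) : ℝ :=
  L ^ ((m : ℝ) * L) * pdet Z ^ (L - (m : ℝ)) * Real.exp (-(L * rtrace (S⁻¹ * Z)))
    / (pdet S ^ L * mGamma m L)

/-!
The Wishart density factors as `c(Z) · exp(-L tr(Σ⁻¹Z)) / det(Σ)^L` with a nonnegative factor
`c(Z)` independent of `Σ`. In the geometric mean `f₁^β f₂^{1-β}` the factor `c(Z)` survives
unchanged, the exponents combine to `-L tr((βΣ₁⁻¹ + (1-β)Σ₂⁻¹) Z) = -L tr(Σ_β⁻¹ Z)` by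
linearity of the trace, and the determinants are corrected by the constant
`(det Σ_β / (det Σ₁^β det Σ₂^{1-β}))^L`.
-/

namespace Matrix

variable {m : ℕ}

lemma PosDef.pdet_pos {A : Matrix (Fin m) (Fin m) ℂ} (hA : A.PosDef) : 0 < pdet A :=
  (Complex.pos_iff.mp hA.det_pos).1

lemma PosDef.ofReal_smul_add_ofReal_smul {A B : Matrix (Fin m) (Fin m) ℂ} (hA : A.PosDef)
    (hB : B.PosDef) {a b : ℝ} (ha : 0 < a) (hb : 0 < b) :
    ((a : ℂ) • A + (b : ℂ) • B).PosDef :=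
  (hA.smul (by exact_mod_cast ha)).add (hB.smul (by exact_mod_cast hb))

lemma rtrace_ofReal_smul_add_ofReal_smul_mul (a b : ℝ) (A B Z : Matrix (Fin m) (Fin m) ℂ) :
    rtrace (((a : ℂ) • A + (b : ℂ) • B) * Z) = a * rtrace (A * Z) + b * rtrace (B * Z) := by
  simp [rtrace, Matrix.add_mul, Matrix.trace_add, Matrix.trace_smul]

end Matrix

lemma mGamma_pos {m : ℕ} {L : ℝ} (hL : (m : ℝ) ≤ L) : 0 < mGamma m L := by
  refine mul_pos (pow_pos Real.pi_pos _) (Finset.prod_pos fun i hi => Real.Gamma_pos_of_pos ?_)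
  have : (i : ℝ) + 1 ≤ m := by exact_mod_cast Finset.mem_range.mp hi
  linarith

lemma wdens_eq_mul {m : ℕ} (L : ℝ) (S Z : Matrix (Fin m) (Fin m) ℂ) :
    wdens m L S Z = L ^ ((m : ℝ) * L) * pdet Z ^ (L - (m : ℝ)) / mGamma m L
      * (Real.exp (-(L * rtrace (S⁻¹ * Z))) / pdet S ^ L) := by
  rw [wdens]
  ring

lemma Real.mul_rpow_mul_mul_rpow_one_sub {c x y : ℝ} (hc : 0 ≤ c) (hx : 0 ≤ x) (hy : 0 ≤ y)
    (β : ℝ) : (c * x) ^ β * (c * y) ^ (1 - β) = c * (x ^ β * y ^ (1 - β)) := by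
  have hc_split : c ^ β * c ^ (1 - β) = c := by
    rw [← Real.rpow_add' hc (by norm_num), add_sub_cancel, Real.rpow_one]
  rw [Real.mul_rpow hc hx, Real.mul_rpow hc hy]
  linear_combination (x ^ β * y ^ (1 - β)) * hc_split

lemma exp_div_rpow_geom_mean (L β t₁ t₂ : ℝ) {d₁ d₂ d : ℝ}
    (hd₁ : 0 < d₁) (hd₂ : 0 < d₂) (hd : 0 < d) :
    (Real.exp (-(L * t₁)) / d₁ ^ L) ^ β * (Real.exp (-(L * t₂)) / d₂ ^ L) ^ (1 - β)
      = (d / (d₁ ^ β * d₂ ^ (1 - β))) ^ L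
        * (Real.exp (-(L * (β * t₁ + (1 - β) * t₂))) / d ^ L) := by
  rw [← Real.exp_log hd₁, ← Real.exp_log hd₂, ← Real.exp_log hd]
  simp only [← Real.exp_mul, ← Real.exp_add, ← Real.exp_sub, Real.exp_eq_exp]
  ring

theorem stmt0_general (m : ℕ) (L : ℝ) (hL : (m : ℝ) ≤ L)
    (S₁ S₂ : Matrix (Fin m) (Fin m) ℂ) (h₁ : S₁.PosDef) (h₂ : S₂.PosDef)
    (β : ℝ) (hβ : β ∈ Set.Ioo (0 : ℝ) 1)
    (Sβ : Matrix (Fin m) (Fin m) ℂ)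
    (hSβ : Sβ = ((β : ℂ) • S₁⁻¹ + ((1 - β : ℝ) : ℂ) • S₂⁻¹)⁻¹) :
    Sβ.PosDef ∧
    ∀ Z : Matrix (Fin m) (Fin m) ℂ, Z.PosDef →
      wdens m L S₁ Z ^ β * wdens m L S₂ Z ^ (1 - β)
        = (pdet Sβ / (pdet S₁ ^ β * pdet S₂ ^ (1 - β))) ^ L * wdens m L Sβ Z := by
  obtain ⟨hβ₀, hβ₁⟩ := hβ
  have hM := h₁.inv.ofReal_smul_add_ofReal_smul h₂.inv hβ₀ (sub_pos.mpr hβ₁)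
  have hSβpd : Sβ.PosDef := hSβ ▸ hM.inv
  refine ⟨hSβpd, fun Z hZ => ?_⟩
  have htr : rtrace (Sβ⁻¹ * Z) = β * rtrace (S₁⁻¹ * Z) + (1 - β) * rtrace (S₂⁻¹ * Z) := by
    rw [hSβ, nonsing_inv_nonsing_inv _ ((isUnit_iff_isUnit_det _).mp hM.isUnit),
      rtrace_ofReal_smul_add_ofReal_smul_mul]
  have hc : 0 ≤ L ^ ((m : ℝ) * L) * pdet Z ^ (L - (m : ℝ)) / mGamma m L := by
    have hL₀ : 0 ≤ L := le_trans (Nat.cast_nonneg m) hL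
    have := hZ.pdet_pos
    have := mGamma_pos hL
    positivity
  rw [wdens_eq_mul, wdens_eq_mul, wdens_eq_mul, Real.mul_rpow_mul_mul_rpow_one_sub hc
    (by have := h₁.pdet_pos; positivity) (by have := h₂.pdet_pos; positivity),
    exp_div_rpow_geom_mean L β _ _ h₁.pdet_pos h₂.pdet_pos hSβpd.pdet_pos, htr]
  ring

theorem stmt0 (m : ℕ) (hm : 1 ≤ m) (L : ℝ) (hL : (m : ℝ) ≤ L)
    (S₁ S₂ : Matrix (Fin m) (Fin m) ℂ) (h₁ : S₁.PosDef) (h₂ : S₂.PosDef)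
    (β : ℝ) (hβ : β ∈ Set.Ioo (0 : ℝ) 1)
    (Sβ : Matrix (Fin m) (Fin m) ℂ)
    (hSβ : Sβ = ((β : ℂ) • S₁⁻¹ + ((1 - β : ℝ) : ℂ) • S₂⁻¹)⁻¹) :
    Sβ.PosDef ∧
    ∀ Z : Matrix (Fin m) (Fin m) ℂ, Z.PosDef →
      wdens m L S₁ Z ^ β * wdens m L S₂ Z ^ (1 - β)
        = (pdet Sβ / (pdet S₁ ^ β * pdet S₂ ^ (1 - β))) ^ L * wdens m L Sβ Z :=
  stmt0_general m L hL S₁ S₂ h₁ h₂ β hβ Sβ hSβ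
end

section
/- Let m ≥ 1 be an integer and Σ₁, Σ₂ m×m Hermitian positive definite complex matrices. Then Re[tr(Σ₁⁻¹·Σ₂) + tr(Σ₂⁻¹·Σ₁)] ≥ 2m, with equality if and only if Σ₁ = Σ₂. Consequently, for every real L > 0 the closed-form Kullback–Leibler distance d_KL(Σ₁,Σ₂) = L·[Re tr(Σ₁⁻¹Σ₂ + Σ₂⁻¹Σ₁)/2 − m] between two scaled complex Wishart laws with the same number of looks is nonnegative and vanishes exactly when Σ₁ = Σ₂. -/
open Matrix ComplexOrder

/-!
With `D = S₂ - S₁`, expanding `(S₁⁻¹ S₂ - 1)(1 - S₂⁻¹ S₁)` gives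
`tr (S₁⁻¹ S₂) + tr (S₂⁻¹ S₁) = 2m + tr (S₁⁻¹ D S₂⁻¹ D)`. Factoring `S₁⁻¹ = Bᴴ B` and
`S₂⁻¹ = Cᴴ C` with `B`, `C` invertible turns the last trace into `tr (X Xᴴ)` for
`X = B D Cᴴ`, which is nonnegative and vanishes only when `X = 0`, i.e. `D = 0`.
-/

namespace Matrix

variable {n : Type*} [Fintype n] [DecidableEq n]

theorem inv_mul_sub_mul_inv_mul_sub {R : Type*} [CommRing R] {A B : Matrix n n R}
    (hA : IsUnit A) (hB : IsUnit B) :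
    A⁻¹ * (B - A) * B⁻¹ * (B - A) = A⁻¹ * B + B⁻¹ * A - 2 := by
  have hAA : A⁻¹ * A = 1 := nonsing_inv_mul A ((isUnit_iff_isUnit_det A).mp hA)
  have hBB : B * B⁻¹ = 1 := mul_nonsing_inv B ((isUnit_iff_isUnit_det B).mp hB)
  have hBB' : B⁻¹ * B = 1 := nonsing_inv_mul B ((isUnit_iff_isUnit_det B).mp hB)
  calc A⁻¹ * (B - A) * B⁻¹ * (B - A)
      = (A⁻¹ * B - 1) * (1 - B⁻¹ * A) := by
        simp only [mul_sub, sub_mul, hAA, mul_assoc, hBB', mul_one]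
    _ = A⁻¹ * B + B⁻¹ * A - 2 := by
        have hcancel : A⁻¹ * B * (B⁻¹ * A) = 1 := by
          rw [mul_assoc, ← mul_assoc B, hBB, one_mul, hAA]
        rw [sub_mul, mul_sub, mul_sub, hcancel, mul_one, one_mul, one_mul, ← one_add_one_eq_two]
        abel

theorem trace_inv_mul_add_trace_inv_mul {R : Type*} [CommRing R] {A B : Matrix n n R}
    (hA : IsUnit A) (hB : IsUnit B) :
    (A⁻¹ * B).trace + (B⁻¹ * A).trace =
      2 * Fintype.card n + (A⁻¹ * (B - A) * B⁻¹ * (B - A)).trace := by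
  have htrace_two : (2 : Matrix n n R).trace = 2 * Fintype.card n := by
    rw [← one_add_one_eq_two, trace_add, trace_one, two_mul]
  rw [inv_mul_sub_mul_inv_mul_sub hA hB, trace_sub, trace_add, htrace_two]
  ring

variable {𝕜 : Type*} [RCLike 𝕜]

open scoped MatrixOrder in
theorem PosDef.exists_trace_mul_mul_mul_eq {P Q D : Matrix n n 𝕜} (hP : P.PosDef) (hQ : Q.PosDef)
    (hD : D.IsHermitian) :
    ∃ X : Matrix n n 𝕜, (P * D * Q * D).trace = (X * Xᴴ).trace ∧ (X = 0 ↔ D = 0) := by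
  obtain ⟨B, hB, rfl⟩ := CStarAlgebra.isStrictlyPositive_iff_eq_star_mul_self.mp
    hP.isStrictlyPositive
  obtain ⟨C, hC, rfl⟩ := CStarAlgebra.isStrictlyPositive_iff_eq_star_mul_self.mp
    hQ.isStrictlyPositive
  refine ⟨B * D * Cᴴ, ?_, ?_⟩
  · rw [conjTranspose_mul, conjTranspose_mul, conjTranspose_conjTranspose, hD.eq,
      star_eq_conjTranspose, star_eq_conjTranspose]
    simp only [mul_assoc]
    rw [trace_mul_comm]
    simp only [mul_assoc]
  · rw [← star_eq_conjTranspose, hC.star.mul_left_eq_zero, hB.mul_right_eq_zero]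

theorem PosDef.trace_mul_mul_mul_nonneg {P Q D : Matrix n n 𝕜} (hP : P.PosDef) (hQ : Q.PosDef)
    (hD : D.IsHermitian) : 0 ≤ (P * D * Q * D).trace := by
  obtain ⟨X, hX, -⟩ := hP.exists_trace_mul_mul_mul_eq hQ hD
  exact hX ▸ (posSemidef_self_mul_conjTranspose X).trace_nonneg

theorem PosDef.trace_mul_mul_mul_eq_zero_iff {P Q D : Matrix n n 𝕜} (hP : P.PosDef)
    (hQ : Q.PosDef) (hD : D.IsHermitian) : (P * D * Q * D).trace = 0 ↔ D = 0 := by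
  obtain ⟨X, hX, hXD⟩ := hP.exists_trace_mul_mul_mul_eq hQ hD
  rw [hX, trace_mul_conjTranspose_self_eq_zero_iff, hXD]

theorem PosDef.two_card_le_trace_inv_mul_add {S₁ S₂ : Matrix n n 𝕜} (h₁ : S₁.PosDef)
    (h₂ : S₂.PosDef) : 2 * (Fintype.card n : 𝕜) ≤ (S₁⁻¹ * S₂).trace + (S₂⁻¹ * S₁).trace := by
  rw [trace_inv_mul_add_trace_inv_mul h₁.isUnit h₂.isUnit, le_add_iff_nonneg_right]
  exact h₁.inv.trace_mul_mul_mul_nonneg h₂.inv (h₂.isHermitian.sub h₁.isHermitian)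

theorem PosDef.trace_inv_mul_add_eq_two_card_iff {S₁ S₂ : Matrix n n 𝕜} (h₁ : S₁.PosDef)
    (h₂ : S₂.PosDef) :
    (S₁⁻¹ * S₂).trace + (S₂⁻¹ * S₁).trace = 2 * (Fintype.card n : 𝕜) ↔ S₁ = S₂ := by
  rw [trace_inv_mul_add_trace_inv_mul h₁.isUnit h₂.isUnit, add_eq_left,
    h₁.inv.trace_mul_mul_mul_eq_zero_iff h₂.inv (h₂.isHermitian.sub h₁.isHermitian), sub_eq_zero,
    eq_comm]

theorem PosDef.two_card_le_re_trace_inv_mul_add {S₁ S₂ : Matrix n n 𝕜} (h₁ : S₁.PosDef)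
    (h₂ : S₂.PosDef) :
    2 * (Fintype.card n : ℝ) ≤ RCLike.re ((S₁⁻¹ * S₂).trace + (S₂⁻¹ * S₁).trace) := by
  simpa using (RCLike.le_iff_re_im.mp (h₁.two_card_le_trace_inv_mul_add h₂)).1

theorem PosDef.re_trace_inv_mul_add_eq_two_card_iff {S₁ S₂ : Matrix n n 𝕜} (h₁ : S₁.PosDef)
    (h₂ : S₂.PosDef) :
    RCLike.re ((S₁⁻¹ * S₂).trace + (S₂⁻¹ * S₁).trace) = 2 * (Fintype.card n : ℝ) ↔ S₁ = S₂ := by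
  have him := (RCLike.le_iff_re_im.mp (h₁.two_card_le_trace_inv_mul_add h₂)).2
  rw [← h₁.trace_inv_mul_add_eq_two_card_iff h₂, RCLike.ext_iff (K := 𝕜), ← him]
  simp

end Matrix

theorem stmt4_general (m : ℕ)
    (S₁ S₂ : Matrix (Fin m) (Fin m) ℂ) (h₁ : S₁.PosDef) (h₂ : S₂.PosDef) :
    (2 * (m : ℝ) ≤ ((S₁⁻¹ * S₂).trace + (S₂⁻¹ * S₁).trace).re) ∧
    (((S₁⁻¹ * S₂).trace + (S₂⁻¹ * S₁).trace).re = 2 * (m : ℝ) ↔ S₁ = S₂) ∧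
    ∀ L : ℝ, 0 < L →
      0 ≤ L * (((S₁⁻¹ * S₂).trace + (S₂⁻¹ * S₁).trace).re / 2 - (m : ℝ)) ∧
      (L * (((S₁⁻¹ * S₂).trace + (S₂⁻¹ * S₁).trace).re / 2 - (m : ℝ)) = 0 ↔ S₁ = S₂) := by
  have hle := h₁.two_card_le_re_trace_inv_mul_add h₂
  have heq := h₁.re_trace_inv_mul_add_eq_two_card_iff h₂
  simp only [Fintype.card_fin, RCLike.re_to_complex] at hle heq
  refine ⟨hle, heq, fun L hL => ⟨?_, ?_⟩⟩
  · exact mul_nonneg hL.le (by linarith)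
  · rw [mul_eq_zero, or_iff_right hL.ne', ← heq, sub_eq_zero, div_eq_iff two_ne_zero, mul_comm]

theorem stmt4 (m : ℕ) (hm : 1 ≤ m)
    (S₁ S₂ : Matrix (Fin m) (Fin m) ℂ) (h₁ : S₁.PosDef) (h₂ : S₂.PosDef) :
    (2 * (m : ℝ) ≤ ((S₁⁻¹ * S₂).trace + (S₂⁻¹ * S₁).trace).re) ∧
    (((S₁⁻¹ * S₂).trace + (S₂⁻¹ * S₁).trace).re = 2 * (m : ℝ) ↔ S₁ = S₂) ∧
    ∀ L : ℝ, 0 < L →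
      0 ≤ L * (((S₁⁻¹ * S₂).trace + (S₂⁻¹ * S₁).trace).re / 2 - (m : ℝ)) ∧
      (L * (((S₁⁻¹ * S₂).trace + (S₂⁻¹ * S₁).trace).re / 2 - (m : ℝ)) = 0 ↔ S₁ = S₂) :=
  stmt4_general m S₁ S₂ h₁ h₂
end

section
/- Let m ≥ 1 be an integer and Σ₁, Σ₂ m×m Hermitian positive definite complex matrices. Then det(((Σ₁⁻¹ + Σ₂⁻¹)/2)⁻¹) ≤ √(det(Σ₁)·det(Σ₂)), where all determinants are the (positive real) determinants of Hermitian positive definite matrices, and equality holds if and only if Σ₁ = Σ₂. Consequently, for every real L > 0 the closed-form Bhattacharyya distance d_BA(Σ₁,Σ₂) = L·[(log det Σ₁ + log det Σ₂)/2 − log det(((Σ₁⁻¹+Σ₂⁻¹)/2)⁻¹)] between two scaled complex Wishart laws with the same number of looks is nonnegative and vanishes exactly when Σ₁ = Σ₂. -/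
/-!
Write `P = R * R` with `R = √P` and `Q = R * N * R`. Then `(P + Q) / 2 = R * ((1 + N) / 2) * R`, so
`det P * det Q / det ((P + Q) / 2) ^ 2 = ∏ μᵢ / ((1 + μᵢ) / 2) ^ 2` over the eigenvalues `μᵢ > 0` of
`N`. Each factor is at most `1` by AM-GM, with equality only at `μᵢ = 1`, that is, only for `N = 1`,
i.e. `P = Q`. Applied to `P = Σ₁⁻¹`, `Q = Σ₂⁻¹` this bounds the determinant of the harmonic mean
by the geometric mean of the determinants, and strict monotonicity of `log` gives the distance
statement.
-/

open Matrix ComplexOrder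

lemma le_two_inv_mul_one_add_sq (x : ℝ) : x ≤ (2⁻¹ * (1 + x)) ^ 2 := by
  nlinarith [sq_nonneg (1 - x)]

lemma lt_two_inv_mul_one_add_sq {x : ℝ} (hx : x ≠ 1) : x < (2⁻¹ * (1 + x)) ^ 2 := by
  nlinarith [sq_pos_of_ne_zero (sub_ne_zero.mpr hx)]

namespace Finset

variable {ι : Type*} (s : Finset ι) {μ : ι → ℝ}

lemma prod_le_prod_two_inv_mul_one_add_sq (hμ : ∀ i ∈ s, 0 ≤ μ i) :
    ∏ i ∈ s, μ i ≤ (∏ i ∈ s, 2⁻¹ * (1 + μ i)) ^ 2 := by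
  rw [← prod_pow]
  exact prod_le_prod hμ fun i _ => le_two_inv_mul_one_add_sq (μ i)

lemma prod_eq_prod_two_inv_mul_one_add_sq_iff (hμ : ∀ i ∈ s, 0 < μ i) :
    ∏ i ∈ s, μ i = (∏ i ∈ s, 2⁻¹ * (1 + μ i)) ^ 2 ↔ ∀ i ∈ s, μ i = 1 := by
  refine ⟨fun h => ?_, fun h => ?_⟩
  · by_contra! ⟨i, hi, hμi⟩
    rw [← prod_pow] at h
    exact (prod_lt_prod hμ (fun j _ => le_two_inv_mul_one_add_sq (μ j))
      ⟨i, hi, lt_two_inv_mul_one_add_sq hμi⟩).ne h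
  · rw [← prod_pow]
    exact prod_congr rfl fun i hi => by norm_num [h i hi]

end Finset

namespace Matrix

variable {𝕜 n : Type*} [RCLike 𝕜] [Fintype n] [DecidableEq n]

lemma IsHermitian.det_cfc {A : Matrix n n 𝕜} (hA : A.IsHermitian) (f : ℝ → ℝ) :
    (cfc f A).det = ∏ i, (f (hA.eigenvalues i) : 𝕜) := by
  rw [hA.cfc_eq, IsHermitian.cfc, Unitary.conjStarAlgAut_apply, det_mul_right_comm]
  simp

lemma cfc_two_inv_mul_one_add (A : Matrix n n 𝕜) (hA : A.IsHermitian) :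
    cfc (fun x : ℝ => 2⁻¹ * (1 + x)) A = (2⁻¹ : 𝕜) • (1 + A) := by
  rw [cfc_const_mul _ _ A, cfc_const_add _ _ A, cfc_id' ℝ A, map_one,
    RCLike.real_smul_eq_coe_smul (K := 𝕜), RCLike.ofReal_inv, RCLike.ofReal_ofNat]

lemma IsHermitian.eq_one_of_eigenvalues_eq_one {A : Matrix n n 𝕜} (hA : A.IsHermitian)
    (h : ∀ i, hA.eigenvalues i = 1) : A = 1 := by
  rw [← cfc_id' ℝ A, ← cfc_const_one ℝ A]
  refine cfc_congr fun x hx => ?_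
  obtain ⟨i, rfl⟩ := hA.spectrum_real_eq_range_eigenvalues ▸ hx
  exact h i

namespace PosDef

variable {N P Q : Matrix n n 𝕜}

lemma det_le_det_two_inv_smul_one_add_sq (hN : N.PosDef) :
    N.det ≤ ((2⁻¹ : 𝕜) • (1 + N)).det ^ 2 := by
  rw [← cfc_two_inv_mul_one_add N hN.1, hN.1.det_cfc, hN.1.det_eq_prod_eigenvalues]
  exact_mod_cast
    Finset.univ.prod_le_prod_two_inv_mul_one_add_sq fun i _ => (hN.eigenvalues_pos i).le

lemma det_eq_det_two_inv_smul_one_add_sq_iff (hN : N.PosDef) :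
    N.det = ((2⁻¹ : 𝕜) • (1 + N)).det ^ 2 ↔ N = 1 := by
  refine ⟨fun h => hN.1.eq_one_of_eigenvalues_eq_one fun i => ?_, fun h => ?_⟩
  · rw [← cfc_two_inv_mul_one_add N hN.1, hN.1.det_cfc, hN.1.det_eq_prod_eigenvalues] at h
    have hμ := Finset.univ.prod_eq_prod_two_inv_mul_one_add_sq_iff fun i _ => hN.eigenvalues_pos i
    exact hμ.mp (by exact_mod_cast h) i (Finset.mem_univ i)
  · rw [h, ← two_smul 𝕜 (1 : Matrix n n 𝕜), smul_smul]
    norm_num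

lemma exists_isUnit_eq_mul_self_and_eq_mul_mul (hP : P.PosDef) (hQ : Q.PosDef) :
    ∃ R N : Matrix n n 𝕜, IsUnit R ∧ N.PosDef ∧ P = R * R ∧ Q = R * N * R := by
  open scoped MatrixOrder in
  have hR : IsStrictlyPositive (CFC.sqrt P) := IsStrictlyPositive.sqrt P hP.isStrictlyPositive
  have hRinv : star (CFC.sqrt P)⁻¹ = (CFC.sqrt P)⁻¹ := by
    rw [star_eq_conjTranspose, conjTranspose_nonsing_inv, ← star_eq_conjTranspose,
      hR.isSelfAdjoint.star_eq]
  refine ⟨CFC.sqrt P, (CFC.sqrt P)⁻¹ * Q * (CFC.sqrt P)⁻¹, hR.isUnit, ?_,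
    (CFC.sqrt_mul_sqrt_self P hP.posSemidef.nonneg).symm, ?_⟩
  · have := (isUnit_nonsing_inv_iff.mpr hR.isUnit).posDef_star_right_conjugate_iff.mpr hQ
    rwa [hRinv] at this
  · have hdet : IsUnit (CFC.sqrt P).det := (isUnit_iff_isUnit_det _).mp hR.isUnit
    rw [← Matrix.mul_assoc, mul_nonsing_inv_cancel_left _ _ hdet,
      nonsing_inv_mul_cancel_right _ _ hdet]

lemma two_inv_smul_mul_self_add (R N : Matrix n n 𝕜) :
    (2⁻¹ : 𝕜) • (R * R + R * N * R) = R * ((2⁻¹ : 𝕜) • (1 + N)) * R := by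
  noncomm_ring

lemma two_inv_smul_inv_add_inv (hP : P.PosDef) (hQ : Q.PosDef) :
    ((2⁻¹ : 𝕜) • (P⁻¹ + Q⁻¹)).PosDef :=
  (hP.inv.add hQ.inv).smul (by norm_num)

lemma det_mul_det_le_det_two_inv_smul_add_sq (hP : P.PosDef) (hQ : Q.PosDef) :
    P.det * Q.det ≤ ((2⁻¹ : 𝕜) • (P + Q)).det ^ 2 := by
  obtain ⟨R, N, -, hN, rfl, rfl⟩ := exists_isUnit_eq_mul_self_and_eq_mul_mul hP hQ
  have hR : 0 < R.det * R.det := det_mul R R ▸ hP.det_pos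
  rw [two_inv_smul_mul_self_add]
  simp only [det_mul]
  calc R.det * R.det * (R.det * N.det * R.det) = (R.det * R.det) ^ 2 * N.det := by ring
    _ ≤ (R.det * R.det) ^ 2 * ((2⁻¹ : 𝕜) • (1 + N)).det ^ 2 :=
      mul_le_mul_of_nonneg_left hN.det_le_det_two_inv_smul_one_add_sq (pow_nonneg hR.le 2)
    _ = _ := by ring

lemma det_mul_det_eq_det_two_inv_smul_add_sq_iff (hP : P.PosDef) (hQ : Q.PosDef) :
    P.det * Q.det = ((2⁻¹ : 𝕜) • (P + Q)).det ^ 2 ↔ P = Q := by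
  obtain ⟨R, N, hRu, hN, rfl, rfl⟩ := exists_isUnit_eq_mul_self_and_eq_mul_mul hP hQ
  have hR : R.det * R.det ≠ 0 := det_mul R R ▸ hP.det_pos.ne'
  have hcancel : R * R = R * N * R ↔ N = 1 :=
    ⟨fun h => (hRu.mul_left_cancel (hRu.mul_right_cancel (by simpa using h))).symm,
      fun h => by simp [h]⟩
  rw [two_inv_smul_mul_self_add, hcancel, ← hN.det_eq_det_two_inv_smul_one_add_sq_iff,
    ← mul_right_inj' (pow_ne_zero 2 hR) (b := N.det)]
  simp only [det_mul]
  constructor <;> intro h <;> linear_combination h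

end PosDef
end Matrix

section pdet

variable {m : ℕ} {A P Q : Matrix (Fin m) (Fin m) ℂ}

lemma ofReal_pdet (hA : A.PosDef) : (pdet A : ℂ) = A.det := by
  obtain ⟨x, -, hx⟩ := RCLike.pos_iff_exists_ofReal.mp hA.det_pos
  rw [pdet, ← hx]
  simp

lemma pdet_pos (hA : A.PosDef) : 0 < pdet A := by
  have h := hA.det_pos
  rw [← ofReal_pdet hA] at h
  exact_mod_cast h

lemma pdet_inv (hA : A.PosDef) : pdet A⁻¹ = (pdet A)⁻¹ := by
  rw [pdet, det_nonsing_inv, Ring.inverse_eq_inv', ← ofReal_pdet hA, ← Complex.ofReal_inv,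
    Complex.ofReal_re]

lemma pdet_harmonic_mean_sq_le (hP : P.PosDef) (hQ : Q.PosDef) :
    pdet ((2⁻¹ : ℂ) • (P⁻¹ + Q⁻¹))⁻¹ ^ 2 ≤ pdet P * pdet Q := by
  have hX := hP.two_inv_smul_inv_add_inv hQ
  have h := hP.inv.det_mul_det_le_det_two_inv_smul_add_sq hQ.inv
  rw [← ofReal_pdet hP.inv, ← ofReal_pdet hQ.inv, ← ofReal_pdet hX, pdet_inv hP, pdet_inv hQ] at h
  rw [pdet_inv hX, inv_pow,
    inv_le_comm₀ (pow_pos (pdet_pos hX) 2) (mul_pos (pdet_pos hP) (pdet_pos hQ)),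
    mul_inv]
  exact_mod_cast h

lemma pdet_harmonic_mean_sq_eq_iff (hP : P.PosDef) (hQ : Q.PosDef) :
    pdet ((2⁻¹ : ℂ) • (P⁻¹ + Q⁻¹))⁻¹ ^ 2 = pdet P * pdet Q ↔ P = Q := by
  have hX := hP.two_inv_smul_inv_add_inv hQ
  have h := hP.inv.det_mul_det_eq_det_two_inv_smul_add_sq_iff hQ.inv
  rw [← ofReal_pdet hP.inv, ← ofReal_pdet hQ.inv, ← ofReal_pdet hX, pdet_inv hP, pdet_inv hQ] at h
  have hinv : P⁻¹ = Q⁻¹ ↔ P = Q :=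
    ⟨fun h => inv_inj h ((isUnit_iff_isUnit_det P).mp hP.isUnit), congrArg _⟩
  rw [pdet_inv hX, inv_pow, inv_eq_iff_eq_inv, eq_comm, mul_inv, ← hinv]
  exact_mod_cast h

end pdet

theorem stmt5_general (m : ℕ)
    (S₁ S₂ : Matrix (Fin m) (Fin m) ℂ) (h₁ : S₁.PosDef) (h₂ : S₂.PosDef) :
    pdet (((2 : ℂ))⁻¹ • (S₁⁻¹ + S₂⁻¹))⁻¹ ≤ Real.sqrt (pdet S₁ * pdet S₂) ∧
    (pdet (((2 : ℂ))⁻¹ • (S₁⁻¹ + S₂⁻¹))⁻¹ = Real.sqrt (pdet S₁ * pdet S₂) ↔ S₁ = S₂) ∧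
    ∀ L : ℝ, 0 < L →
      0 ≤ L * ((Real.log (pdet S₁) + Real.log (pdet S₂)) / 2
              - Real.log (pdet (((2 : ℂ))⁻¹ • (S₁⁻¹ + S₂⁻¹))⁻¹)) ∧
      (L * ((Real.log (pdet S₁) + Real.log (pdet S₂)) / 2
              - Real.log (pdet (((2 : ℂ))⁻¹ • (S₁⁻¹ + S₂⁻¹))⁻¹)) = 0 ↔ S₁ = S₂) := by
  have hy := pdet_pos (h₁.two_inv_smul_inv_add_inv h₂).inv
  have hab := mul_pos (pdet_pos h₁) (pdet_pos h₂)
  have hle : pdet ((2⁻¹ : ℂ) • (S₁⁻¹ + S₂⁻¹))⁻¹ ≤ √(pdet S₁ * pdet S₂) :=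
    (Real.le_sqrt hy.le hab.le).mpr (pdet_harmonic_mean_sq_le h₁ h₂)
  have heq : pdet ((2⁻¹ : ℂ) • (S₁⁻¹ + S₂⁻¹))⁻¹ = √(pdet S₁ * pdet S₂) ↔ S₁ = S₂ := by
    rw [eq_comm, Real.sqrt_eq_iff_eq_sq hab.le hy.le, eq_comm]
    exact pdet_harmonic_mean_sq_eq_iff h₁ h₂
  have hlog : (Real.log (pdet S₁) + Real.log (pdet S₂)) / 2 = Real.log √(pdet S₁ * pdet S₂) := by
    rw [Real.log_sqrt hab.le, Real.log_mul (pdet_pos h₁).ne' (pdet_pos h₂).ne']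
  refine ⟨hle, heq, fun L hL => ⟨?_, ?_⟩⟩
  · rw [hlog]
    exact mul_nonneg hL.le (sub_nonneg.mpr (Real.log_le_log hy hle))
  · rw [hlog, mul_eq_zero, sub_eq_zero, ← heq,
      Real.log_injOn_pos.eq_iff (Real.sqrt_pos.mpr hab) hy]
    simp [hL.ne', eq_comm]

theorem stmt5 (m : ℕ) (hm : 1 ≤ m)
    (S₁ S₂ : Matrix (Fin m) (Fin m) ℂ) (h₁ : S₁.PosDef) (h₂ : S₂.PosDef) :
    pdet (((2 : ℂ))⁻¹ • (S₁⁻¹ + S₂⁻¹))⁻¹ ≤ Real.sqrt (pdet S₁ * pdet S₂) ∧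
    (pdet (((2 : ℂ))⁻¹ • (S₁⁻¹ + S₂⁻¹))⁻¹ = Real.sqrt (pdet S₁ * pdet S₂) ↔ S₁ = S₂) ∧
    ∀ L : ℝ, 0 < L →
      0 ≤ L * ((Real.log (pdet S₁) + Real.log (pdet S₂)) / 2
              - Real.log (pdet (((2 : ℂ))⁻¹ • (S₁⁻¹ + S₂⁻¹))⁻¹)) ∧
      (L * ((Real.log (pdet S₁) + Real.log (pdet S₂)) / 2
              - Real.log (pdet (((2 : ℂ))⁻¹ • (S₁⁻¹ + S₂⁻¹))⁻¹)) = 0 ↔ S₁ = S₂) :=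
  stmt5_general m S₁ S₂ h₁ h₂
end

section
/- Let L > 0 and σ₁², σ₂² > 0 be real numbers, and let f₁(z) = f(z;σ₁²,L) and f₂(z) = f(z;σ₂²,L) be the corresponding gamma densities. Then ∫₀^∞ √(f₁(z)·f₂(z)) dz = (2σ₁σ₂/(σ₁²+σ₂²))^L, where σ_i = √(σ_i²). Consequently the Bhattacharyya distance d_BA = −log ∫₀^∞ √(f₁ f₂) between the two gamma laws equals L·log((σ₁²+σ₂²)/(2σ₁σ₂)), in agreement with the single-channel (m = 1) case of the closed-form Bhattacharyya distance between scaled complex Wishart laws. -/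
/-!
Since `exp (-L z / σ₁²) · exp (-L z / σ₂²) = exp (-L z / σ²)²` for the harmonic mean
`σ² = 2σ₁²σ₂² / (σ₁² + σ₂²)`, the pointwise geometric mean `√(f₁ f₂)` is the gamma density
`f(·; σ², L)` scaled by `(σ² / (σ₁σ₂))^L = (2σ₁σ₂ / (σ₁² + σ₂²))^L`; a density integrates to `1`.
-/

open MeasureTheory

noncomputable def gdens (L s2 : ℝ) (z : ℝ) : ℝ :=
  L ^ L * z ^ (L - 1) * Real.exp (-(L * z / s2)) / (s2 ^ L * Real.Gamma L)

open Real Set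

lemma gdens_eq_const_mul (L s z : ℝ) :
    gdens L s z = L ^ L / (s ^ L * Gamma L) * (z ^ (L - 1) * exp (-(L / s * z))) := by
  rw [gdens]
  ring_nf

lemma gdens_nonneg {L s z : ℝ} (hL : 0 < L) (hs : 0 < s) (hz : 0 ≤ z) : 0 ≤ gdens L s z := by
  have hΓ := Gamma_pos_of_pos hL
  unfold gdens
  positivity

lemma integral_gdens {L s : ℝ} (hL : 0 < L) (hs : 0 < s) :
    ∫ z in Ioi 0, gdens L s z = 1 := by
  simp_rw [gdens_eq_const_mul]
  rw [integral_const_mul, integral_rpow_mul_exp_neg_mul_Ioi hL (div_pos hL hs), one_div_div,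
    div_rpow hs.le hL.le]
  have hLL := (rpow_pos_of_pos hL L).ne'
  have hsL := (rpow_pos_of_pos hs L).ne'
  have hΓ := (Gamma_pos_of_pos hL).ne'
  field_simp

lemma gdens_mul_gdens (L : ℝ) {s₁ s₂ : ℝ} (h₁ : 0 < s₁) (h₂ : 0 < s₂) (z : ℝ) :
    gdens L s₁ z * gdens L s₂ z =
      ((2 * √s₁ * √s₂ / (s₁ + s₂)) ^ L * gdens L (2 * s₁ * s₂ / (s₁ + s₂)) z) ^ 2 := by
  have hr₁ := sqrt_pos.2 h₁
  have hr₂ := sqrt_pos.2 h₂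
  have hscale : (2 * √s₁ * √s₂ / (s₁ + s₂)) ^ L * (√s₁ ^ L * √s₂ ^ L)
      = (2 * s₁ * s₂ / (s₁ + s₂)) ^ L := by
    rw [← mul_rpow hr₁.le hr₂.le, ← mul_rpow (by positivity) (by positivity)]
    congr 1
    field_simp
    rw [sq_sqrt h₁.le, sq_sqrt h₂.le]
  have hsq (s : ℝ) (hs : 0 < s) : (√s ^ L) ^ 2 = s ^ L := by
    rw [rpow_pow_comm (sqrt_nonneg s), sq_sqrt hs.le]
  have hexp : exp (-(L * z / s₁)) * exp (-(L * z / s₂))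
      = exp (-(L * z / (2 * s₁ * s₂ / (s₁ + s₂)))) ^ 2 := by
    rw [← exp_add, ← exp_nat_mul]
    congr 1
    field_simp
    ring
  have hr₁L := (rpow_pos_of_pos hr₁ L).ne'
  have hr₂L := (rpow_pos_of_pos hr₂ L).ne'
  have hkL := (rpow_pos_of_pos (by positivity : 0 < 2 * √s₁ * √s₂ / (s₁ + s₂)) L).ne'
  rw [gdens, gdens, gdens, ← hscale, ← hsq s₁ h₁, ← hsq s₂ h₂]
  -- hide the harmonic mean from `field_simp`, so that `hexp` still matches afterwards
  generalize 2 * s₁ * s₂ / (s₁ + s₂) = s at hexp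
  field_simp
  rw [mul_assoc _ (exp _), hexp]

lemma sqrt_gdens_mul_gdens {L s₁ s₂ z : ℝ} (hL : 0 < L) (h₁ : 0 < s₁) (h₂ : 0 < s₂)
    (hz : 0 ≤ z) :
    √(gdens L s₁ z * gdens L s₂ z) =
      (2 * √s₁ * √s₂ / (s₁ + s₂)) ^ L * gdens L (2 * s₁ * s₂ / (s₁ + s₂)) z := by
  rw [gdens_mul_gdens L h₁ h₂, sqrt_sq]
  have := gdens_nonneg hL (by positivity : 0 < 2 * s₁ * s₂ / (s₁ + s₂)) hz
  positivity

theorem stmt9 (L s1 s2 : ℝ) (hL : 0 < L) (h1 : 0 < s1) (h2 : 0 < s2) :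
    (∫ z in Set.Ioi (0 : ℝ), Real.sqrt (gdens L s1 z * gdens L s2 z))
      = (2 * Real.sqrt s1 * Real.sqrt s2 / (s1 + s2)) ^ L ∧
    (-Real.log (∫ z in Set.Ioi (0 : ℝ), Real.sqrt (gdens L s1 z * gdens L s2 z)))
      = L * Real.log ((s1 + s2) / (2 * Real.sqrt s1 * Real.sqrt s2)) := by
  have hcoeff : ∫ z in Ioi (0 : ℝ), √(gdens L s1 z * gdens L s2 z)
      = (2 * √s1 * √s2 / (s1 + s2)) ^ L := by
    rw [setIntegral_congr_fun measurableSet_Ioi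
        fun z hz ↦ sqrt_gdens_mul_gdens hL h1 h2 (le_of_lt hz),
      integral_const_mul, integral_gdens hL (by positivity), mul_one]
  refine ⟨hcoeff, ?_⟩
  rw [hcoeff, log_rpow (by positivity), ← inv_div, log_inv, mul_neg, neg_neg]
end

section
/- Let L > 0 and σ₁², σ₂² > 0 be real numbers, and let f₁(z) = f(z;σ₁²,L) and f₂(z) = f(z;σ₂²,L) be the corresponding gamma densities. Then the Hellinger distance d_H = 1 − ∫₀^∞ √(f₁(z)·f₂(z)) dz equals 1 − (2σ₁σ₂/(σ₁²+σ₂²))^L, it satisfies 0 ≤ d_H < 1, and d_H = 0 if and only if σ₁² = σ₂². This is the single-channel (m = 1) case of the closed-form Hellinger distance between scaled complex Wishart laws, which is confined to the interval [0,1]. -/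
open MeasureTheory

/-!
`f(z;σ²,L)` is the gamma density of shape `L` and rate `L/σ²`. For gamma densities of a common
shape `a` and rates `b₁, b₂`, `√(f₁ f₂)` is `(√(b₁b₂))^a` times the unnormalised gamma kernel of
rate `(b₁ + b₂)/2`, so `∫ √(f₁ f₂)` is the `a`-th power of the ratio of the geometric to the
arithmetic mean of the rates. That ratio is invariant under `b ↦ L/b`, and AM-GM puts it in
`(0, 1]`, with `1` exactly when the rates agree.
-/

open ProbabilityTheory Real Set

section MeanRatio

variable {a b : ℝ}

lemma two_mul_sqrt_mul_sqrt_le_add (ha : 0 ≤ a) (hb : 0 ≤ b) : 2 * √a * √b ≤ a + b := by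
  nlinarith [sq_nonneg (√a - √b), sq_sqrt ha, sq_sqrt hb]

lemma two_mul_sqrt_mul_sqrt_div_add_le_one (ha : 0 ≤ a) (hb : 0 ≤ b) :
    2 * √a * √b / (a + b) ≤ 1 :=
  div_le_one_of_le₀ (two_mul_sqrt_mul_sqrt_le_add ha hb) (add_nonneg ha hb)

lemma two_mul_sqrt_mul_sqrt_div_add_eq_one_iff (ha : 0 ≤ a) (hb : 0 ≤ b) (hab : 0 < a + b) :
    2 * √a * √b / (a + b) = 1 ↔ a = b := by
  rw [div_eq_one_iff_eq hab.ne']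
  constructor
  · intro h
    have hsq : (√a - √b) ^ 2 = 0 := by
      linear_combination sq_sqrt ha + sq_sqrt hb - h
    exact (sqrt_inj ha hb).1 (sub_eq_zero.1 (pow_eq_zero_iff two_ne_zero |>.1 hsq))
  · rintro rfl
    linear_combination 2 * mul_self_sqrt ha

lemma two_mul_sqrt_div_mul_sqrt_div_div_add {c : ℝ} (hc : 0 < c) (ha : 0 < a) (hb : 0 < b) :
    2 * √(c / a) * √(c / b) / (c / a + c / b) = 2 * √a * √b / (a + b) := by
  obtain ⟨p, hp, rfl⟩ : ∃ p, 0 < p ∧ a = p ^ 2 := ⟨√a, sqrt_pos.2 ha, (sq_sqrt ha.le).symm⟩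
  obtain ⟨q, hq, rfl⟩ : ∃ q, 0 < q ∧ b = q ^ 2 := ⟨√b, sqrt_pos.2 hb, (sq_sqrt hb.le).symm⟩
  obtain ⟨t, ht, rfl⟩ : ∃ t, 0 < t ∧ c = t ^ 2 := ⟨√c, sqrt_pos.2 hc, (sq_sqrt hc.le).symm⟩
  rw [← div_pow, ← div_pow, sqrt_sq (by positivity), sqrt_sq (by positivity), sqrt_sq hp.le,
    sqrt_sq hq.le]
  field_simp
  ring

end MeanRatio

section GammaAffinity

variable {a b₁ b₂ : ℝ}

lemma sqrt_gammaPDFReal_mul_gammaPDFReal (ha : 0 < a) (hb₁ : 0 ≤ b₁) (hb₂ : 0 ≤ b₂) {x : ℝ}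
    (hx : 0 ≤ x) :
    √(gammaPDFReal a b₁ x * gammaPDFReal a b₂ x)
      = (√b₁ * √b₂) ^ a / Gamma a * (x ^ (a - 1) * exp (-((b₁ + b₂) / 2 * x))) := by
  have hrate (b : ℝ) (hb : 0 ≤ b) : b ^ a = √b ^ a * √b ^ a := by
    rw [← mul_rpow (sqrt_nonneg b) (sqrt_nonneg b), mul_self_sqrt hb]
  have hexp : exp (-(b₁ * x)) * exp (-(b₂ * x))
      = exp (-((b₁ + b₂) / 2 * x)) * exp (-((b₁ + b₂) / 2 * x)) := by
    rw [← exp_add, ← exp_add]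
    ring_nf
  rw [← sqrt_mul_self (by positivity : 0 ≤ (√b₁ * √b₂) ^ a / Gamma a *
    (x ^ (a - 1) * exp (-((b₁ + b₂) / 2 * x))))]
  congr 1
  simp only [gammaPDFReal, if_pos hx, hrate b₁ hb₁, hrate b₂ hb₂,
    mul_rpow (sqrt_nonneg b₁) (sqrt_nonneg b₂)]
  linear_combination (√b₁ ^ a * √b₁ ^ a * √b₂ ^ a * √b₂ ^ a / Gamma a ^ 2
    * x ^ (a - 1) * x ^ (a - 1)) * hexp

lemma integral_sqrt_gammaPDFReal_mul_gammaPDFReal (ha : 0 < a) (hb₁ : 0 < b₁) (hb₂ : 0 < b₂) :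
    ∫ x in Ioi 0, √(gammaPDFReal a b₁ x * gammaPDFReal a b₂ x)
      = (2 * √b₁ * √b₂ / (b₁ + b₂)) ^ a := by
  have hG := (Gamma_pos_of_pos ha).ne'
  have hb : 0 < (b₁ + b₂) / 2 := by positivity
  rw [setIntegral_congr_fun measurableSet_Ioi fun x hx =>
      sqrt_gammaPDFReal_mul_gammaPDFReal ha hb₁.le hb₂.le (le_of_lt hx),
    integral_const_mul, integral_rpow_mul_exp_neg_mul_Ioi ha hb,
    mul_comm _ (Gamma a), ← mul_assoc, div_mul_cancel₀ _ hG,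
    ← mul_rpow (by positivity) (by positivity)]
  congr 1
  field_simp

end GammaAffinity

lemma gdens_eq_gammaPDFReal {L s z : ℝ} (hL : 0 ≤ L) (hs : 0 < s) (hz : 0 ≤ z) :
    gdens L s z = gammaPDFReal L (L / s) z := by
  rw [gdens, gammaPDFReal, if_pos hz, div_rpow hL hs.le, mul_comm (L / s), div_mul_eq_mul_div]
  field_simp

theorem stmt14 (L s1 s2 : ℝ) (hL : 0 < L) (h1 : 0 < s1) (h2 : 0 < s2) :
    (1 - ∫ z in Set.Ioi (0 : ℝ), Real.sqrt (gdens L s1 z * gdens L s2 z))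
      = 1 - (2 * Real.sqrt s1 * Real.sqrt s2 / (s1 + s2)) ^ L ∧
    0 ≤ 1 - ∫ z in Set.Ioi (0 : ℝ), Real.sqrt (gdens L s1 z * gdens L s2 z) ∧
    (1 - ∫ z in Set.Ioi (0 : ℝ), Real.sqrt (gdens L s1 z * gdens L s2 z)) < 1 ∧
    ((1 - ∫ z in Set.Ioi (0 : ℝ), Real.sqrt (gdens L s1 z * gdens L s2 z)) = 0 ↔ s1 = s2) := by
  have haffinity : ∫ z in Ioi 0, √(gdens L s1 z * gdens L s2 z)
      = (2 * √s1 * √s2 / (s1 + s2)) ^ L := by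
    rw [setIntegral_congr_fun measurableSet_Ioi fun z (hz : 0 < z) => by
        rw [gdens_eq_gammaPDFReal hL.le h1 hz.le, gdens_eq_gammaPDFReal hL.le h2 hz.le],
      integral_sqrt_gammaPDFReal_mul_gammaPDFReal hL (div_pos hL h1) (div_pos hL h2),
      two_mul_sqrt_div_mul_sqrt_div_div_add hL h1 h2]
  set r := 2 * √s1 * √s2 / (s1 + s2) with hr
  have hr0 : 0 < r := by positivity
  have hr1 : r ^ L ≤ 1 := rpow_le_one hr0.le (two_mul_sqrt_mul_sqrt_div_add_le_one h1.le h2.le) hL.le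
  rw [haffinity]
  refine ⟨rfl, sub_nonneg.2 hr1, by linarith [rpow_pos_of_pos hr0 L], ?_⟩
  rw [sub_eq_zero, eq_comm, ← two_mul_sqrt_mul_sqrt_div_add_eq_one_iff h1.le h2.le (by positivity),
    ← hr, ← rpow_left_inj hr0.le zero_le_one hL.ne', one_rpow]
end
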